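/- Let Φ = A_n, realized with simple roots α_i = ε_{i-1} − ε_i in the hyperplane of ℝ^{n+1} of coordinate-sum zero. Suppose ω is in the Weyl group orbit of the fundamental coweight ω_k^∨ and satisfies (ω_j^∨, ω) = (ω_j^∨, ω_k^∨) for some j < k. Then there exists w in the Weyl group W ≅ S_{n+1} fixing all of ω_1^∨,…,ω_j^∨ such that ω = w·ω_k^∨. -/

import Mathlib

open scoped RealInnerProductSpace

/-- The fundamental coweight `ω_j^∨ = (ε_0 + ⋯ + ε_{j-1}) - (j/(n+1)) Σ_{i=0}^n ε_i` of the
root system `A_n` realized in the sum-zero hyperplane of `ℝ^{n+1}`. -/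
noncomputable def fundCoweightA (n j : ℕ) : EuclideanSpace ℝ (Fin (n + 1)) :=
  WithLp.toLp 2 (fun i : Fin (n + 1) => (if (i : ℕ) < j then 1 else 0) - (j : ℝ) / (n + 1))

/-- The action of the Weyl group `W = S_{n+1}` of `A_n` on `ℝ^{n+1}` by permuting the
coordinates. -/
def permAct {n : ℕ} (σ : Equiv.Perm (Fin (n + 1))) (v : EuclideanSpace ℝ (Fin (n + 1))) :
    EuclideanSpace ℝ (Fin (n + 1)) :=
  WithLp.toLp 2 (fun i => v (σ i))

/-!
Write `ω = σ·ω_k^∨`. Pairing with `ω_j^∨` is the sum of the first `j` coordinates minus a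
multiple of the coordinate sum, and the latter is invariant under permutations. Since every
coordinate of `ω_k^∨` is at most its value at an index `< k`, equality of the pairings forces `σ`
to map `{0, …, j-1}` into `{0, …, k-1}`. Extending `σ` on `{0, …, j-1}` to a permutation `τ`
that stabilizes `{0, …, k-1}`, the permutation `w = τ⁻¹σ` fixes `0, …, j-1` pointwise, hence
fixes `ω_1^∨, …, ω_j^∨`, and still sends `ω_k^∨` to `ω` because `τ` fixes `ω_k^∨`.
-/

theorem Equiv.Perm.exists_extend_of_injOn {α : Type*} [Fintype α]
    {p : α → Prop} [DecidablePred p] {s : Set α} {f : α → α} (hs : ∀ x ∈ s, p x)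
    (hf : ∀ x ∈ s, p (f x)) (hinj : Set.InjOn f s) :
    ∃ τ : Equiv.Perm α, (∀ x ∈ s, τ x = f x) ∧ ∀ x, p (τ x) ↔ p x := by
  obtain ⟨g, hg⟩ := Set.MapsTo.exists_equiv_extend_of_card_eq
    (α := {x // p x}) (t := Finset.univ.filter p) (s := Subtype.val ⁻¹' s)
    (f := f ∘ Subtype.val) (by rw [Fintype.card_subtype])
    (fun x hx => by simpa using hf x hx)
    (fun x hx y hy hxy => Subtype.val_injective (hinj hx hy hxy))
  let e : Equiv.Perm {x // p x} := g.trans (Equiv.subtypeEquivRight (by simp))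
  refine ⟨Equiv.Perm.ofSubtype e, fun x hx => ?_, fun x => ?_⟩
  · rw [Equiv.Perm.ofSubtype_apply_of_mem e (hs x hx)]
    exact hg ⟨x, hs x hx⟩ hx
  · by_cases hx : p x
    · simp only [Equiv.Perm.ofSubtype_apply_of_mem e hx, hx, iff_true]
      exact (e ⟨x, hx⟩).2
    · rw [Equiv.Perm.ofSubtype_apply_of_not_mem e hx]

section CoweightsA

variable {n : ℕ}

theorem fundCoweightA_apply (j : ℕ) (i : Fin (n + 1)) :
    fundCoweightA n j i = (if (i : ℕ) < j then 1 else 0) - (j : ℝ) / (n + 1) := rfl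

@[simp]
theorem permAct_apply (σ : Equiv.Perm (Fin (n + 1))) (v : EuclideanSpace ℝ (Fin (n + 1)))
    (i : Fin (n + 1)) : permAct σ v i = v (σ i) := rfl

theorem permAct_permAct (σ τ : Equiv.Perm (Fin (n + 1))) (v : EuclideanSpace ℝ (Fin (n + 1))) :
    permAct σ (permAct τ v) = permAct (τ * σ) v := rfl

theorem sum_permAct (σ : Equiv.Perm (Fin (n + 1))) (v : EuclideanSpace ℝ (Fin (n + 1))) :
    ∑ i, permAct σ v i = ∑ i, v i :=
  Equiv.sum_comp σ (fun i => v i)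

theorem inner_fundCoweightA (j : ℕ) (v : EuclideanSpace ℝ (Fin (n + 1))) :
    ⟪fundCoweightA n j, v⟫ =
      (∑ i ∈ Finset.univ.filter (fun i : Fin (n + 1) => (i : ℕ) < j), v i) -
        j / (n + 1) * ∑ i, v i := by
  simp [PiLp.inner_apply, fundCoweightA_apply, Finset.sum_filter, Finset.mul_sum, sub_mul,
    ite_mul, Finset.sum_sub_distrib, mul_comm (v _)]

theorem permAct_fundCoweightA_of_apply_lt_iff {σ : Equiv.Perm (Fin (n + 1))} {j : ℕ}
    (hσ : ∀ i : Fin (n + 1), (σ i : ℕ) < j ↔ (i : ℕ) < j) :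
    permAct σ (fundCoweightA n j) = fundCoweightA n j := by
  ext i
  simp [fundCoweightA_apply, hσ]

theorem apply_lt_iff_of_forall_lt_apply_eq {w : Equiv.Perm (Fin (n + 1))} {j j' : ℕ}
    (hw : ∀ i : Fin (n + 1), (i : ℕ) < j → w i = i) (hj' : j' ≤ j) (x : Fin (n + 1)) :
    (w x : ℕ) < j' ↔ (x : ℕ) < j' := by
  constructor
  · intro hx
    rwa [← w.injective (hw _ (hx.trans_le hj'))]
  · intro hx
    rwa [hw x (hx.trans_le hj')]

theorem fundCoweightA_apply_le (k : ℕ) (x y : Fin (n + 1)) (hy : (y : ℕ) < k) :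
    fundCoweightA n k x ≤ fundCoweightA n k y := by
  simp only [fundCoweightA_apply, hy, if_true]
  split_ifs <;> norm_num

theorem lt_of_fundCoweightA_apply_eq {k : ℕ} {x y : Fin (n + 1)} (hy : (y : ℕ) < k)
    (h : fundCoweightA n k x = fundCoweightA n k y) : (x : ℕ) < k := by
  by_contra hx
  simp only [fundCoweightA_apply, hx, hy, if_true, if_false] at h
  linarith

theorem apply_lt_of_inner_permAct_fundCoweightA_eq {j k : ℕ} (hjk : j ≤ k)
    {σ : Equiv.Perm (Fin (n + 1))}
    (h : ⟪fundCoweightA n j, permAct σ (fundCoweightA n k)⟫ =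
      ⟪fundCoweightA n j, fundCoweightA n k⟫) (i : Fin (n + 1)) (hi : (i : ℕ) < j) :
    (σ i : ℕ) < k := by
  have hik : (i : ℕ) < k := hi.trans_le hjk
  rw [inner_fundCoweightA, inner_fundCoweightA, sum_permAct, sub_left_inj] at h
  have hle : ∀ i ∈ Finset.univ.filter (fun i : Fin (n + 1) => (i : ℕ) < j),
      permAct σ (fundCoweightA n k) i ≤ fundCoweightA n k i := fun i hi =>
    fundCoweightA_apply_le k _ _ ((Finset.mem_filter.1 hi).2.trans_le hjk)
  exact lt_of_fundCoweightA_apply_eq hik <|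
    (Finset.sum_eq_sum_iff_of_le hle).1 h i (by simpa using hi)

end CoweightsA

theorem stmt10_general (n j k : ℕ) (hjk : j < k)
    (ω : EuclideanSpace ℝ (Fin (n + 1)))
    (horb : ∃ σ : Equiv.Perm (Fin (n + 1)), ω = permAct σ (fundCoweightA n k))
    (hip : ⟪fundCoweightA n j, ω⟫ = ⟪fundCoweightA n j, fundCoweightA n k⟫) :
    ∃ w : Equiv.Perm (Fin (n + 1)),
      (∀ j' : ℕ, 1 ≤ j' → j' ≤ j → permAct w (fundCoweightA n j') = fundCoweightA n j') ∧
      ω = permAct w (fundCoweightA n k) := by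
  obtain ⟨σ, rfl⟩ := horb
  obtain ⟨τ, hτσ, hτ⟩ := Equiv.Perm.exists_extend_of_injOn
    (p := fun x : Fin (n + 1) => (x : ℕ) < k) (s := {i | (i : ℕ) < j}) (f := σ)
    (fun i hi => hi.trans hjk) (apply_lt_of_inner_permAct_fundCoweightA_eq hjk.le hip)
    σ.injective.injOn
  have hτinv (x : Fin (n + 1)) : (τ⁻¹ x : ℕ) < k ↔ (x : ℕ) < k := by
    simpa using (hτ (τ⁻¹ x)).symm
  have hfix (i : Fin (n + 1)) (hi : (i : ℕ) < j) : (τ⁻¹ * σ) i = i := by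
    rw [Equiv.Perm.mul_apply, Equiv.Perm.inv_eq_iff_eq, hτσ i hi]
  refine ⟨τ⁻¹ * σ, fun j' _ hj' =>
    permAct_fundCoweightA_of_apply_lt_iff (apply_lt_iff_of_forall_lt_apply_eq hfix hj'), ?_⟩
  rw [← permAct_permAct, permAct_fundCoweightA_of_apply_lt_iff hτinv]

/-- (Type `A_n`.)  If `ω` lies in the Weyl group orbit of the fundamental coweight `ω_k^∨`
and `(ω_j^∨, ω) = (ω_j^∨, ω_k^∨)` for some `j < k`, then `ω = w·ω_k^∨` for some `w ∈ S_{n+1}`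
fixing all of `ω_1^∨, …, ω_j^∨`. -/
theorem stmt10 (n j k : ℕ) (hj : 1 ≤ j) (hjk : j < k) (hk : k ≤ n)
    (ω : EuclideanSpace ℝ (Fin (n + 1)))
    (horb : ∃ σ : Equiv.Perm (Fin (n + 1)), ω = permAct σ (fundCoweightA n k))
    (hip : ⟪fundCoweightA n j, ω⟫ = ⟪fundCoweightA n j, fundCoweightA n k⟫) :
    ∃ w : Equiv.Perm (Fin (n + 1)),
      (∀ j' : ℕ, 1 ≤ j' → j' ≤ j → permAct w (fundCoweightA n j') = fundCoweightA n j') ∧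
      ω = permAct w (fundCoweightA n k) :=
  stmt10_general n j k hjk ω horb hip
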